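/- arXiv:2310.07528 — 3 statements merged into one kernel-verified Lean document; each statement's English description precedes it below -/
import Mathlib

section
/- Let f: [0,1]^d → ℝ be Lipschitz with constant ℓ with respect to the sup norm (|f(x)−f(y)| ≤ ℓ‖x−y‖_∞) and bounded by Γ (|f| ≤ Γ). Then for every ε > 0, n ∈ ℕ, and x ∈ [0,1]^d, the degree-n multivariate Bernstein polynomial satisfies |f(x) − B_n(f; x)| ≤ ε + 2Γ·((1 + ℓ²/(4nε²))^d − 1). -/
/-!
Write `B_n(f; x) = ∑_k f(k/n) p_k(x)`, where the product Bernstein weights `p_k(x)` form a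
probability distribution on the grid whose coordinates are independent with mean `x_j` and
variance `x_j(1 - x_j)/n ≤ 1/(4n)`. Hence `|f(x) − B_n(f; x)|` is at most the mean of
`|f(x) − f(k/n)|`. Near `x` (where `ℓ‖x − k/n‖_∞ ≤ ε`) the Lipschitz bound gives `ε`; far from
`x` the crude bound `2Γ` is at most `2Γ(ℓ/ε)²‖x − k/n‖²`, whose mean is at most
`2Γ(ℓ/ε)² d/(4n)`. Bernoulli's inequality `d c ≤ (1 + c)^d − 1` gives the stated form.
-/

open Finset

/-- The unit cube `[0,1]^d`. -/
def cube (d : ℕ) : Set (Fin d → ℝ) := Set.univ.pi fun _ => Set.Icc (0 : ℝ) 1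

/-- The degree-`n` multivariate Bernstein polynomial of `f`. -/
noncomputable def bernsteinPoly (d n : ℕ) (f : (Fin d → ℝ) → ℝ) (x : Fin d → ℝ) : ℝ :=
  ∑ k : Fin d → Fin (n + 1), f (fun j => (k j : ℝ) / n) *
    ∏ j, (n.choose (k j) : ℝ) * x j ^ (k j : ℕ) * (1 - x j) ^ (n - (k j : ℕ))

section ProductWeights

variable {ι α R : Type*} [Fintype ι] [DecidableEq ι] [Fintype α] [CommSemiring R]

theorem sum_prod_eq_one (w : ι → α → R) (hw : ∀ i, ∑ a, w i a = 1) :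
    ∑ k : ι → α, ∏ i, w i (k i) = 1 := by
  rw [← Fintype.prod_sum]
  simp [hw]

theorem sum_apply_mul_prod_eq (w : ι → α → R) (hw : ∀ i, ∑ a, w i a = 1) (j : ι) (g : α → R) :
    ∑ k : ι → α, g (k j) * ∏ i, w i (k i) = ∑ a, g a * w j a := by
  have hfactor : ∀ k : ι → α,
      g (k j) * ∏ i, w i (k i) = ∏ i, (if i = j then g (k i) else 1) * w i (k i) := fun k => by
    rw [prod_mul_distrib, prod_ite_eq' univ j, if_pos (mem_univ j)]
  have hrow : ∀ i, ∑ a, (if i = j then g a else 1) * w i a = if i = j then ∑ a, g a * w j a else 1 :=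
    fun i => by split_ifs with h <;> simp [h, hw]
  simp_rw [hfactor, ← Fintype.prod_sum (fun i a => (if i = j then g a else 1) * w i a), hrow]
  rw [prod_ite_eq' univ j, if_pos (mem_univ j)]

end ProductWeights

theorem abs_sub_sum_mul_le {κ : Type*} [Fintype κ] {p g h : κ → ℝ} {c : ℝ}
    (hp0 : ∀ k, 0 ≤ p k) (hp1 : ∑ k, p k = 1) (hgh : ∀ k, |c - g k| ≤ h k) :
    |c - ∑ k, g k * p k| ≤ ∑ k, h k * p k :=
  calc |c - ∑ k, g k * p k| = |∑ k, (c - g k) * p k| := by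
        simp only [sub_mul, sum_sub_distrib, ← mul_sum, hp1, mul_one]
    _ ≤ ∑ k, |(c - g k) * p k| := abs_sum_le_sum_abs _ _
    _ = ∑ k, |c - g k| * p k := by simp only [abs_mul, abs_of_nonneg (hp0 _)]
    _ ≤ ∑ k, h k * p k := sum_le_sum fun k _ => mul_le_mul_of_nonneg_right (hgh k) (hp0 k)

theorem le_add_mul_div_sq {a b c ε : ℝ} (ha : 0 ≤ a) (hab : a ≤ b) (hac : a ≤ c) (hε : 0 < ε) :
    a ≤ ε + c * (b / ε) ^ 2 := by
  have hc : 0 ≤ c := ha.trans hac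
  rcases le_or_gt b ε with hbε | hεb
  · nlinarith [mul_nonneg hc (sq_nonneg (b / ε))]
  · have h1 : 1 ≤ (b / ε) ^ 2 := one_le_pow₀ ((one_le_div hε).2 hεb.le)
    nlinarith [le_mul_of_one_le_right hc h1]

theorem norm_sq_le_sum_sq {ι : Type*} [Fintype ι] (v : ι → ℝ) : ‖v‖ ^ 2 ≤ ∑ i, v i ^ 2 := by
  have hsum : 0 ≤ ∑ i, v i ^ 2 := sum_nonneg fun i _ => sq_nonneg (v i)
  have hnorm : ‖v‖ ≤ √(∑ i, v i ^ 2) := (pi_norm_le_iff_of_nonneg (Real.sqrt_nonneg _)).2 fun i =>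
    Real.abs_le_sqrt (single_le_sum (fun j _ => sq_nonneg (v j)) (mem_univ i))
  calc ‖v‖ ^ 2 ≤ √(∑ i, v i ^ 2) ^ 2 := by gcongr
    _ = ∑ i, v i ^ 2 := Real.sq_sqrt hsum

theorem abs_sub_le_of_lipschitz_of_bounded {ι : Type*} [Fintype ι] {s : Set (ι → ℝ)}
    {f : (ι → ℝ) → ℝ} {ℓ Γ ε : ℝ} (hlip : ∀ x ∈ s, ∀ y ∈ s, |f x - f y| ≤ ℓ * ‖x - y‖)
    (hbd : ∀ x ∈ s, |f x| ≤ Γ) (hε : 0 < ε) {x y : ι → ℝ} (hx : x ∈ s) (hy : y ∈ s) :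
    |f x - f y| ≤ ε + 2 * Γ * (ℓ / ε) ^ 2 * ∑ i, (x i - y i) ^ 2 := by
  have hΓ : 0 ≤ Γ := (abs_nonneg _).trans (hbd x hx)
  have hcrude : |f x - f y| ≤ 2 * Γ := by
    linarith [abs_sub (f x) (f y), hbd x hx, hbd y hy]
  calc |f x - f y| ≤ ε + 2 * Γ * (ℓ * ‖x - y‖ / ε) ^ 2 :=
        le_add_mul_div_sq (abs_nonneg _) (hlip x hx y hy) hcrude hε
    _ = ε + 2 * Γ * (ℓ / ε) ^ 2 * ‖x - y‖ ^ 2 := by ring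
    _ ≤ ε + 2 * Γ * (ℓ / ε) ^ 2 * ∑ i, (x i - y i) ^ 2 := by
        gcongr
        exact norm_sq_le_sum_sq (x - y)

theorem mul_one_sub_le_quarter (t : ℝ) : t * (1 - t) ≤ 1 / 4 := by
  nlinarith [sq_nonneg (2 * t - 1)]

section Bernstein

variable {n : ℕ} {t : ℝ}

def bernsteinWeight (n : ℕ) (t : ℝ) (m : Fin (n + 1)) : ℝ :=
  n.choose m * t ^ (m : ℕ) * (1 - t) ^ (n - (m : ℕ))

theorem bernsteinWeight_eq_bernstein (ht : t ∈ Set.Icc (0 : ℝ) 1) (m : Fin (n + 1)) :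
    bernsteinWeight n t m = bernstein n m ⟨t, ht⟩ :=
  (bernstein_apply n m ⟨t, ht⟩).symm

theorem bernsteinWeight_nonneg (ht : t ∈ Set.Icc (0 : ℝ) 1) (m : Fin (n + 1)) :
    0 ≤ bernsteinWeight n t m := by
  rw [bernsteinWeight_eq_bernstein ht]
  exact bernstein_nonneg

theorem sum_bernsteinWeight (ht : t ∈ Set.Icc (0 : ℝ) 1) : ∑ m, bernsteinWeight n t m = 1 := by
  simp only [bernsteinWeight_eq_bernstein ht, bernstein.probability]

theorem sum_sq_mul_bernsteinWeight (hn : n ≠ 0) (ht : t ∈ Set.Icc (0 : ℝ) 1) :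
    ∑ m : Fin (n + 1), (t - m / n) ^ 2 * bernsteinWeight n t m = t * (1 - t) / n := by
  simpa only [bernsteinWeight_eq_bernstein ht, bernstein.z] using bernstein.variance hn ⟨t, ht⟩

variable {d : ℕ} {x : Fin d → ℝ}

theorem bernsteinPoly_eq_sum (f : (Fin d → ℝ) → ℝ) :
    bernsteinPoly d n f x =
      ∑ k : Fin d → Fin (n + 1), f (fun j => k j / n) * ∏ j, bernsteinWeight n (x j) (k j) :=
  rfl

theorem grid_mem_cube (k : Fin d → Fin (n + 1)) : (fun j => (k j : ℝ) / n) ∈ cube d :=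
  Set.mem_univ_pi.2 fun j => ⟨by positivity, div_le_one_of_le₀ (mod_cast (k j).is_le) n.cast_nonneg⟩

theorem sum_sum_sq_mul_prod_bernsteinWeight (hn : n ≠ 0) (hx : x ∈ cube d) :
    ∑ k : Fin d → Fin (n + 1), (∑ j, (x j - k j / n) ^ 2) * ∏ j, bernsteinWeight n (x j) (k j) =
      ∑ j, x j * (1 - x j) / n := by
  have hx01 := Set.mem_univ_pi.1 hx
  simp_rw [sum_mul]
  rw [sum_comm]
  refine sum_congr rfl fun j _ => ?_
  rw [← sum_sq_mul_bernsteinWeight hn (hx01 j)]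
  exact sum_apply_mul_prod_eq _ (fun i => sum_bernsteinWeight (hx01 i)) j
    (fun m : Fin (n + 1) => (x j - m / n) ^ 2)

end Bernstein

/-- Bernstein approximation bound for a function Lipschitz in the sup norm and bounded
by `Γ`:  `|f(x) − B_n(f;x)| ≤ ε + 2Γ((1 + ℓ²/(4nε²))^d − 1)`. -/
theorem bernstein_approx_lipschitz (d : ℕ) (f : (Fin d → ℝ) → ℝ) (ℓ Γ : ℝ)
    (hlip : ∀ x ∈ cube d, ∀ y ∈ cube d, |f x - f y| ≤ ℓ * ‖x - y‖)
    (hbd : ∀ x ∈ cube d, |f x| ≤ Γ) :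
    ∀ ε > (0 : ℝ), ∀ n : ℕ, 0 < n → ∀ x ∈ cube d,
      |f x - bernsteinPoly d n f x| ≤
        ε + 2 * Γ * ((1 + ℓ ^ 2 / (4 * n * ε ^ 2)) ^ d - 1) := by
  intro ε hε n hn x hx
  have hx01 := Set.mem_univ_pi.1 hx
  have hΓ : 0 ≤ Γ := (abs_nonneg _).trans (hbd x hx)
  have hp1 := sum_prod_eq_one _ fun j => sum_bernsteinWeight (n := n) (hx01 j)
  have hvar : ∑ j, x j * (1 - x j) / n ≤ d / (4 * n) := by
    calc ∑ j, x j * (1 - x j) / n ≤ ∑ _j : Fin d, (1 / 4 : ℝ) / n := by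
          gcongr; exact mul_one_sub_le_quarter _
      _ = d / (4 * n) := by simp [field]
  have hc : 0 ≤ ℓ ^ 2 / (4 * n * ε ^ 2) := by positivity
  have hbernoulli := one_add_mul_le_pow (show -2 ≤ ℓ ^ 2 / (4 * n * ε ^ 2) by linarith) d
  rw [bernsteinPoly_eq_sum]
  calc _ ≤ ∑ k : Fin d → Fin (n + 1), (ε + 2 * Γ * (ℓ / ε) ^ 2 * ∑ j, (x j - k j / n) ^ 2) *
          ∏ j, bernsteinWeight n (x j) (k j) :=
        abs_sub_sum_mul_le (fun k => prod_nonneg fun j _ => bernsteinWeight_nonneg (hx01 j) _) hp1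
          fun k => abs_sub_le_of_lipschitz_of_bounded hlip hbd hε hx (grid_mem_cube k)
    _ = ε + 2 * Γ * (ℓ / ε) ^ 2 * ∑ j, x j * (1 - x j) / n := by
        simp only [add_mul, sum_add_distrib, mul_assoc, ← mul_sum, hp1, mul_one,
          sum_sum_sq_mul_prod_bernsteinWeight hn.ne' hx]
    _ ≤ ε + 2 * Γ * (ℓ / ε) ^ 2 * (d / (4 * n)) := by gcongr
    _ = ε + 2 * Γ * (d * (ℓ ^ 2 / (4 * n * ε ^ 2))) := by field_simp
    _ ≤ ε + 2 * Γ * ((1 + ℓ ^ 2 / (4 * n * ε ^ 2)) ^ d - 1) := by gcongr; linarith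
end

section
/- For β = s + r with s ∈ ℕ⁺, r ∈ (0,1], f ∈ H^β([0,1]^d, 1), K ∈ ℕ, and a point x in a hypercube Q_η with corner x_η = η/K (where η ∈ {0,…,K−1}^d and each coordinate of x lies in [η_i/K, (η_i+1)/K]), the truncated Taylor expansion T(x) = Σ_{‖α‖₁ ≤ s} (∂^α f(x_η)/α!)(x − x_η)^α satisfies |f(x) − T(x)| ≤ d^{s+β/2} K^{−β}. -/
open Finset

/-- The partial derivative of `f` in direction `i`. -/
noncomputable def partialDeriv {d : ℕ} (i : Fin d) (f : (Fin d → ℝ) → ℝ) :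
    (Fin d → ℝ) → ℝ :=
  fun x => fderiv ℝ f x (Pi.single i 1)

/-- The iterated partial derivative `∂^α f = ∂₁^{α₁} ⋯ ∂_d^{α_d} f`. -/
noncomputable def multiPartialDeriv {d : ℕ} (α : Fin d → ℕ) (f : (Fin d → ℝ) → ℝ) :
    (Fin d → ℝ) → ℝ :=
  (List.ofFn fun i : Fin d => (partialDeriv i)^[α i]).foldr (fun op g => op g) f

/-- The Euclidean distance `‖x − y‖₂` on `ℝ^d`. -/
noncomputable def eucDist {d : ℕ} (x y : Fin d → ℝ) : ℝ :=
  Real.sqrt (∑ i, (x i - y i) ^ 2)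

/-!
Restrict `f` to the segment `g(t) = f(x_η + t v)`, `v = x − x_η`. Mixed partial derivatives of a
`C^s` function commute up to order `s`, so the chain rule gives, by induction on `k`,
`g^{(k)}(t) / k! = ∑_{|α| = k} ∂^α f(x_η + t v) vᵅ / α!`; in particular `T(x)` is the Taylor
polynomial of `g` at `0` evaluated at `1`. Lagrange's remainder turns `f(x) − T(x)` into
`(g^{(s)}(ξ) − g^{(s)}(0)) / s!`, a combination of differences of order-`s` derivatives, each
at most `(√d / K)^r` by Hölder continuity. By the multinomial theorem their weights sum to
`(∑ vᵢ)^s / s! ≤ (d / K)^s`.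
-/

section MultiIndex

variable {ι : Type*} [Fintype ι] [DecidableEq ι]

lemma sum_update_succ (α : ι → ℕ) (i : ι) :
    ∑ j, Function.update α i (α i + 1) j = ∑ j, α j + 1 := by
  rw [sum_update_of_mem (mem_univ i), ← add_sum_erase _ α (mem_univ i), sdiff_singleton_eq_erase]
  ring

lemma prod_apply_update {R : Type*} [CommMonoid R] (F : ι → ℕ → R) (α : ι → ℕ) (i : ι) (a : ℕ) :
    ∏ j, F j (Function.update α i a j) = F i a * ∏ j ∈ univ.erase i, F j (α j) := by
  rw [← mul_prod_erase univ _ (mem_univ i), Function.update_self]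
  congr 1
  exact prod_congr rfl fun j hj => by rw [Function.update_of_ne (ne_of_mem_erase hj)]

/-- Raising the `i`-th entry by one maps the multi-indices of order `k` bijectively onto those
of order `k + 1` with nonzero `i`-th entry. -/
lemma sum_piAntidiag_update_succ {M : Type*} [AddCommMonoid M] (k : ℕ) (i : ι)
    (G : (ι → ℕ) → M) (hG : ∀ β, β i = 0 → G β = 0) :
    ∑ α ∈ piAntidiag univ k, G (Function.update α i (α i + 1))
      = ∑ β ∈ piAntidiag univ (k + 1), G β := by
  refine sum_of_injOn (fun α => Function.update α i (α i + 1)) ?_ ?_ ?_ fun _ _ => rfl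
  · intro α _ α' _ h
    funext j
    have hj := congrFun h j
    rcases eq_or_ne j i with rfl | hne
    · simpa using hj
    · simpa [Function.update_of_ne hne] using hj
  · intro α hα
    rw [mem_coe, mem_piAntidiag] at hα ⊢
    exact ⟨by rw [sum_update_succ, hα.1], fun _ _ => mem_univ _⟩
  · intro β hβ hβ_im
    refine hG β (by_contra fun hβi => hβ_im ⟨Function.update β i (β i - 1), ?_, ?_⟩)
    · have := sum_update_succ (Function.update β i (β i - 1)) i
      simp_all [Nat.sub_add_cancel (Nat.pos_of_ne_zero hβi)]
    · simp [Nat.sub_add_cancel (Nat.pos_of_ne_zero hβi)]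

lemma sum_piAntidiag_prod_pow_div_factorial (v : ι → ℝ) (k : ℕ) :
    ∑ α ∈ piAntidiag univ k, (∏ i, v i ^ α i) / ∏ i, ((α i).factorial : ℝ)
      = (∑ i, v i) ^ k / k.factorial := by
  rw [sum_pow_eq_sum_piAntidiag, sum_div]
  refine sum_congr rfl fun α hα => ?_
  have hspec := Nat.multinomial_spec univ α
  rw [(mem_piAntidiag.mp hα).1] at hspec
  rw [eq_div_iff (by positivity), ← hspec]
  push_cast
  field_simp

lemma sum_filter_sum_le_eq_sum_range_piAntidiag {M : Type*} [AddCommMonoid M] (s : ℕ)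
    (F : (ι → ℕ) → M) :
    ∑ α ∈ univ.filter (fun α : ι → Fin (s + 1) => ∑ i, (α i : ℕ) ≤ s), F (fun i => α i)
      = ∑ k ∈ range (s + 1), ∑ α ∈ piAntidiag univ k, F α := by
  rw [← sum_fiberwise_of_maps_to (g := fun α : ι → Fin (s + 1) => ∑ i, (α i : ℕ))
    (t := range (s + 1)) (fun α hα => mem_range_succ_iff.mpr (mem_filter.mp hα).2)]
  refine sum_congr rfl fun k hk => sum_nbij (fun α i => α i) ?_ ?_ ?_ fun _ _ => rfl
  · intro α hα
    simp_all
  · exact fun α _ α' _ h => funext fun i => Fin.ext (congrFun h i)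
  · intro β hβ
    have hβk : ∀ i, β i ≤ k := fun i =>
      (mem_piAntidiag.mp hβ).1 ▸ single_le_sum (fun j _ => Nat.zero_le (β j)) (mem_univ i)
    have hks : k ≤ s := mem_range_succ_iff.mp hk
    refine ⟨fun i => ⟨β i, by have := hβk i; omega⟩, ?_, rfl⟩
    simp_all

end MultiIndex

section

variable {d : ℕ}

noncomputable def listPartialDeriv (l : List (Fin d)) (f : (Fin d → ℝ) → ℝ) :
    (Fin d → ℝ) → ℝ :=
  l.foldr partialDeriv f

@[simp] lemma listPartialDeriv_nil (f : (Fin d → ℝ) → ℝ) : listPartialDeriv [] f = f := rfl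

@[simp] lemma listPartialDeriv_cons (i : Fin d) (l : List (Fin d)) (f : (Fin d → ℝ) → ℝ) :
    listPartialDeriv (i :: l) f = partialDeriv i (listPartialDeriv l f) := rfl

lemma listPartialDeriv_append (l₁ l₂ : List (Fin d)) (f : (Fin d → ℝ) → ℝ) :
    listPartialDeriv (l₁ ++ l₂) f = listPartialDeriv l₁ (listPartialDeriv l₂ f) :=
  List.foldr_append

lemma partialDeriv_iterate (i : Fin d) (m : ℕ) (f : (Fin d → ℝ) → ℝ) :
    (partialDeriv i)^[m] f = listPartialDeriv (List.replicate m i) f := by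
  induction m with
  | zero => rfl
  | succ m ih => rw [Function.iterate_succ_apply', ih, List.replicate_succ, listPartialDeriv_cons]

def multiIndexList (α : Fin d → ℕ) : List (Fin d) :=
  (List.finRange d).flatMap fun i => List.replicate (α i) i

lemma multiPartialDeriv_eq_listPartialDeriv (α : Fin d → ℕ) (f : (Fin d → ℝ) → ℝ) :
    multiPartialDeriv α f = listPartialDeriv (multiIndexList α) f := by
  rw [multiPartialDeriv, List.ofFn_eq_map, multiIndexList]
  induction List.finRange d with
  | nil => rfl
  | cons i l ih =>
    rw [List.map_cons, List.foldr_cons, ih, List.flatMap_cons, listPartialDeriv_append,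
      partialDeriv_iterate]

lemma count_multiIndexList (α : Fin d → ℕ) (j : Fin d) : (multiIndexList α).count j = α j := by
  simp [multiIndexList, List.count_flatMap, List.count_replicate, ← Fin.sum_univ_def]

lemma length_multiIndexList (α : Fin d → ℕ) : (multiIndexList α).length = ∑ i, α i := by
  simp [multiIndexList, List.length_flatMap, ← Fin.sum_univ_def]

lemma multiIndexList_update_perm (α : Fin d → ℕ) (i : Fin d) :
    (multiIndexList (Function.update α i (α i + 1))).Perm (i :: multiIndexList α) := by
  rw [List.perm_iff_count]
  intro j
  rcases eq_or_ne j i with rfl | h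
  · simp [count_multiIndexList]
  · simp [count_multiIndexList, Function.update_of_ne h, h.symm]

lemma multiIndexList_zero : multiIndexList (0 : Fin d → ℕ) = [] :=
  List.flatMap_eq_nil_iff.mpr fun _ _ => rfl

@[simp] lemma multiPartialDeriv_zero (f : (Fin d → ℝ) → ℝ) : multiPartialDeriv 0 f = f := by
  rw [multiPartialDeriv_eq_listPartialDeriv, multiIndexList_zero, listPartialDeriv_nil]

lemma contDiff_partialDeriv {n : ℕ} {f : (Fin d → ℝ) → ℝ} (i : Fin d)
    (hf : ContDiff ℝ (n + 1 : ℕ) f) : ContDiff ℝ n (partialDeriv i f) :=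
  (hf.fderiv_right (by norm_cast)).clm_apply contDiff_const

lemma contDiff_listPartialDeriv {n : ℕ} {f : (Fin d → ℝ) → ℝ} (l : List (Fin d))
    (hf : ContDiff ℝ (n + l.length : ℕ) f) : ContDiff ℝ n (listPartialDeriv l f) := by
  induction l generalizing n with
  | nil => simpa using hf
  | cons i l ih =>
    exact contDiff_partialDeriv i (ih (hf.of_le (by norm_cast; simp; omega)))

lemma contDiff_multiPartialDeriv {n : ℕ} {f : (Fin d → ℝ) → ℝ} (α : Fin d → ℕ)
    (hf : ContDiff ℝ (n + ∑ i, α i : ℕ) f) : ContDiff ℝ n (multiPartialDeriv α f) := by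
  rw [multiPartialDeriv_eq_listPartialDeriv]
  exact contDiff_listPartialDeriv _ (by rwa [length_multiIndexList])

lemma partialDeriv_partialDeriv_eq_fderiv_fderiv {g : (Fin d → ℝ) → ℝ}
    (hg : ContDiff ℝ 2 g) (i j : Fin d) (x : Fin d → ℝ) :
    partialDeriv i (partialDeriv j g) x
      = fderiv ℝ (fderiv ℝ g) x (Pi.single i 1) (Pi.single j 1) := by
  have hdg : Differentiable ℝ (fderiv ℝ g) :=
    (hg.fderiv_right (m := 1) le_rfl).differentiable one_ne_zero
  change fderiv ℝ (fun y => fderiv ℝ g y (Pi.single j 1)) x (Pi.single i 1) = _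
  rw [fderiv_clm_apply (hdg x) (differentiableAt_const _)]
  simp

lemma partialDeriv_comm {g : (Fin d → ℝ) → ℝ} (hg : ContDiff ℝ 2 g) (i j : Fin d) :
    partialDeriv i (partialDeriv j g) = partialDeriv j (partialDeriv i g) := by
  funext x
  rw [partialDeriv_partialDeriv_eq_fderiv_fderiv hg, partialDeriv_partialDeriv_eq_fderiv_fderiv hg]
  exact second_derivative_symmetric (fun y => (hg.differentiable two_ne_zero y).hasFDerivAt)
    ((hg.fderiv_right (m := 1) le_rfl).differentiable one_ne_zero x).hasFDerivAt _ _

lemma listPartialDeriv_perm {f : (Fin d → ℝ) → ℝ} {l l' : List (Fin d)} (h : l.Perm l')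
    (hf : ContDiff ℝ l.length f) : listPartialDeriv l f = listPartialDeriv l' f := by
  induction h with
  | nil => rfl
  | cons i _ ih =>
    rw [listPartialDeriv_cons, listPartialDeriv_cons, ih (hf.of_le (by norm_cast; simp))]
  | swap i j l =>
    have h2 : ContDiff ℝ 2 (listPartialDeriv l f) :=
      contDiff_listPartialDeriv l (hf.of_le (by norm_cast; simp; omega))
    simp only [listPartialDeriv_cons, partialDeriv_comm h2]
  | trans h₁ _ ih₁ ih₂ => rw [ih₁ hf, ih₂ (by rwa [← h₁.length_eq])]

lemma partialDeriv_multiPartialDeriv {f : (Fin d → ℝ) → ℝ} (α : Fin d → ℕ) (i : Fin d)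
    (hf : ContDiff ℝ (∑ j, α j + 1 : ℕ) f) :
    partialDeriv i (multiPartialDeriv α f)
      = multiPartialDeriv (Function.update α i (α i + 1)) f := by
  simp only [multiPartialDeriv_eq_listPartialDeriv]
  rw [listPartialDeriv_perm (multiIndexList_update_perm α i)
    (by rwa [length_multiIndexList, sum_update_succ]), listPartialDeriv_cons]

lemma fderiv_apply_eq_sum_partialDeriv (h : (Fin d → ℝ) → ℝ) (y v : Fin d → ℝ) :
    fderiv ℝ h y v = ∑ i, v i * partialDeriv i h y := by
  conv_lhs => rw [← univ_sum_single v]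
  refine (map_sum _ _ _).trans (sum_congr rfl fun i _ => ?_)
  rw [partialDeriv, ← smul_eq_mul, ← ContinuousLinearMap.map_smul, ← Pi.single_smul', smul_eq_mul,
    mul_one]

lemma hasDerivAt_comp_line {h : (Fin d → ℝ) → ℝ} (hh : Differentiable ℝ h) (c v : Fin d → ℝ)
    (t : ℝ) :
    HasDerivAt (fun t : ℝ => h (c + t • v)) (∑ i, v i * partialDeriv i h (c + t • v)) t := by
  have hline : HasDerivAt (fun t : ℝ => c + t • v) v t := by
    simpa using ((hasDerivAt_id t).smul_const v).const_add c
  rw [← fderiv_apply_eq_sum_partialDeriv]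
  exact (hh _).hasFDerivAt.comp_hasDerivAt t hline

/-- The degree-`k` part of the Taylor expansion of `f` at `y`, evaluated at the increment `v`. -/
noncomputable def taylorTerm (f : (Fin d → ℝ) → ℝ) (k : ℕ) (y v : Fin d → ℝ) : ℝ :=
  ∑ α ∈ piAntidiag univ k, multiPartialDeriv α f y / (∏ i, ((α i).factorial : ℝ)) *
    ∏ i, v i ^ α i

@[simp] lemma taylorTerm_zero (f : (Fin d → ℝ) → ℝ) (y v : Fin d → ℝ) :
    taylorTerm f 0 y v = f y := by
  simp [taylorTerm]

lemma div_factorial_mul_pow_mul (D : ℝ) (v : Fin d → ℝ) (α : Fin d → ℕ) (i : Fin d) :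
    D / (∏ j, ((α j).factorial : ℝ)) * (∏ j, v j ^ α j) * v i
      = (Function.update α i (α i + 1) i : ℝ) *
        (D / (∏ j, ((Function.update α i (α i + 1) j).factorial : ℝ)) *
          ∏ j, v j ^ Function.update α i (α i + 1) j) := by
  rw [prod_apply_update (fun _ n => (n.factorial : ℝ)), prod_apply_update (fun j n => v j ^ n),
    ← mul_prod_erase univ (fun j => ((α j).factorial : ℝ)) (mem_univ i),
    ← mul_prod_erase univ (fun j => v j ^ α j) (mem_univ i), Function.update_self,
    Nat.factorial_succ, pow_succ]
  have : ∏ j ∈ univ.erase i, ((α j).factorial : ℝ) ≠ 0 := by positivity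
  push_cast
  field_simp

lemma hasDerivAt_taylorTerm_comp_line {f : (Fin d → ℝ) → ℝ} {k : ℕ}
    (hf : ContDiff ℝ (k + 1 : ℕ) f) (c v : Fin d → ℝ) (t : ℝ) :
    HasDerivAt (fun t : ℝ => taylorTerm f k (c + t • v) v)
      ((k + 1) * taylorTerm f (k + 1) (c + t • v) v) t := by
  set term : (Fin d → ℕ) → ℝ := fun β =>
    multiPartialDeriv β f (c + t • v) / (∏ i, ((β i).factorial : ℝ)) * ∏ i, v i ^ β i
  have hterm : ∀ α ∈ piAntidiag univ k, HasDerivAt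
      (fun t : ℝ => multiPartialDeriv α f (c + t • v) / (∏ i, ((α i).factorial : ℝ)) *
        ∏ i, v i ^ α i)
      (∑ i, (Function.update α i (α i + 1) i : ℝ) * term (Function.update α i (α i + 1))) t := by
    intro α hα
    have hk : ∑ i, α i = k := (mem_piAntidiag.mp hα).1
    have hdiff : Differentiable ℝ (multiPartialDeriv α f) :=
      (contDiff_multiPartialDeriv (n := 1) α (by rwa [hk, add_comm])).differentiable one_ne_zero
    refine (((hasDerivAt_comp_line hdiff c v t).div_const _).mul_const _).congr_deriv ?_
    rw [sum_div, sum_mul]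
    refine sum_congr rfl fun i _ => ?_
    rw [partialDeriv_multiPartialDeriv α i (by rwa [hk]), ← div_factorial_mul_pow_mul]
    ring
  -- each `β` of order `k + 1` arises from the pairs `(β - eᵢ, i)`, with weights summing to
  -- `∑ᵢ βᵢ = k + 1`
  refine (HasDerivAt.fun_sum hterm).congr_deriv ?_
  rw [sum_comm, taylorTerm, mul_sum]
  rw [sum_congr rfl fun i _ => sum_piAntidiag_update_succ k i (fun β => (β i : ℝ) * term β)
    fun β hβ => by rw [hβ, Nat.cast_zero, zero_mul]]
  rw [sum_comm]
  refine sum_congr rfl fun β hβ => ?_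
  rw [← sum_mul, ← Nat.cast_sum, (mem_piAntidiag.mp hβ).1]
  push_cast
  rfl

lemma iteratedDeriv_comp_line {f : (Fin d → ℝ) → ℝ} {n : ℕ} (hf : ContDiff ℝ n f)
    (c v : Fin d → ℝ) {k : ℕ} (hk : k ≤ n) :
    iteratedDeriv k (fun t : ℝ => f (c + t • v))
      = fun t => k.factorial * taylorTerm f k (c + t • v) v := by
  induction k with
  | zero => funext t; simp
  | succ k ih =>
    rw [iteratedDeriv_succ, ih (by omega)]
    funext t
    rw [((hasDerivAt_taylorTerm_comp_line (hf.of_le (by exact_mod_cast hk)) c v t).const_mul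
      _).deriv, Nat.factorial_succ]
    push_cast
    ring

lemma sum_filter_le_eq_sum_taylorTerm (f : (Fin d → ℝ) → ℝ) (s : ℕ) (y v : Fin d → ℝ) :
    ∑ α ∈ univ.filter (fun α : Fin d → Fin (s + 1) => ∑ i, (α i : ℕ) ≤ s),
        multiPartialDeriv (fun i => (α i : ℕ)) f y / (∏ i, ((α i : ℕ).factorial : ℝ)) *
          ∏ i, v i ^ (α i : ℕ)
      = ∑ k ∈ range (s + 1), taylorTerm f k y v :=
  sum_filter_sum_le_eq_sum_range_piAntidiag s fun α =>
    multiPartialDeriv α f y / (∏ i, ((α i).factorial : ℝ)) * ∏ i, v i ^ α i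

lemma iteratedDeriv_comp_line_div_factorial {f : (Fin d → ℝ) → ℝ} {n : ℕ}
    (hf : ContDiff ℝ n f) (c v : Fin d → ℝ) {k : ℕ} (hk : k ≤ n) (t : ℝ) :
    iteratedDeriv k (fun t : ℝ => f (c + t • v)) t / k.factorial
      = taylorTerm f k (c + t • v) v := by
  rw [iteratedDeriv_comp_line hf c v hk, mul_div_cancel_left₀ _ (by positivity)]

lemma abs_taylorTerm_sub_le {f : (Fin d → ℝ) → ℝ} {k : ℕ} {y z v : Fin d → ℝ}
    (hv : ∀ i, 0 ≤ v i) {ε : ℝ}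
    (h : ∀ α ∈ piAntidiag univ k, |multiPartialDeriv α f y - multiPartialDeriv α f z| ≤ ε) :
    |taylorTerm f k y v - taylorTerm f k z v| ≤ ε * (∑ i, v i) ^ k / k.factorial := by
  rw [mul_div_assoc, ← sum_piAntidiag_prod_pow_div_factorial, mul_sum, taylorTerm, taylorTerm,
    ← sum_sub_distrib]
  refine (abs_sum_le_sum_abs _ _).trans (sum_le_sum fun α hα => ?_)
  have hw : 0 ≤ (∏ i, v i ^ α i) / ∏ i, ((α i).factorial : ℝ) :=
    div_nonneg (prod_nonneg fun i _ => pow_nonneg (hv i) _) (by positivity)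
  calc _ = |multiPartialDeriv α f y - multiPartialDeriv α f z| *
        ((∏ i, v i ^ α i) / ∏ i, ((α i).factorial : ℝ)) := by
        rw [← abs_of_nonneg hw, ← abs_mul]
        ring_nf
    _ ≤ _ := mul_le_mul_of_nonneg_right (h α hα) hw

/-- Lagrange's form of the remainder, with the top-order term moved into it so that `n = 0`
is included. -/
lemma exists_sub_sum_taylor_eq {g : ℝ → ℝ} {n : ℕ} (hg : ContDiff ℝ n g) :
    ∃ ξ ∈ Set.Icc (0 : ℝ) 1, g 1 - ∑ k ∈ range (n + 1), iteratedDeriv k g 0 / k.factorial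
      = (iteratedDeriv n g ξ - iteratedDeriv n g 0) / n.factorial := by
  cases n with
  | zero => exact ⟨1, by simp⟩
  | succ n =>
    obtain ⟨ξ, hξ, h⟩ := taylor_mean_remainder_lagrange_iteratedDeriv (n := n) (zero_ne_one' ℝ)
      hg.contDiffOn
    rw [Set.uIoo_of_le zero_le_one] at hξ
    refine ⟨ξ, Set.Ioo_subset_Icc_self hξ, ?_⟩
    have hcoeff : ∀ k ∈ range (n + 1), ((k.factorial : ℝ)⁻¹ * (1 - 0) ^ k) •
        iteratedDerivWithin k g (Set.uIcc 0 1) 0 = iteratedDeriv k g 0 / k.factorial := by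
      intro k hk
      rw [Set.uIcc_of_le zero_le_one,
        iteratedDerivWithin_eq_iteratedDeriv (uniqueDiffOn_Icc one_pos)
          (hg.contDiffAt.of_le (by exact_mod_cast (mem_range.mp hk).le))
          (Set.left_mem_Icc.mpr zero_le_one)]
      simp [div_eq_inv_mul]
    rw [taylor_within_apply, sum_congr rfl hcoeff] at h
    rw [sum_range_succ, ← sub_sub, h]
    ring

lemma abs_sub_sum_taylorTerm_le {f : (Fin d → ℝ) → ℝ} {s : ℕ} (hf : ContDiff ℝ s f)
    {c v : Fin d → ℝ} (hv : ∀ i, 0 ≤ v i) {ε : ℝ}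
    (h : ∀ α ∈ piAntidiag univ s, ∀ t ∈ Set.Icc (0 : ℝ) 1,
      |multiPartialDeriv α f (c + t • v) - multiPartialDeriv α f c| ≤ ε) :
    |f (c + v) - ∑ k ∈ range (s + 1), taylorTerm f k c v| ≤ ε * (∑ i, v i) ^ s / s.factorial := by
  obtain ⟨ξ, hξ, hrem⟩ := exists_sub_sum_taylor_eq (g := fun t : ℝ => f (c + t • v))
    (hf.comp (contDiff_const.add (contDiff_id.smul contDiff_const)))
  have hcoeff : ∀ k ∈ range (s + 1),
      iteratedDeriv k (fun t : ℝ => f (c + t • v)) 0 / k.factorial = taylorTerm f k c v :=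
    fun k hk => by
      rw [iteratedDeriv_comp_line_div_factorial hf c v (mem_range_succ_iff.mp hk), zero_smul,
        add_zero]
  rw [sum_congr rfl hcoeff, sub_div, iteratedDeriv_comp_line_div_factorial hf c v le_rfl,
    iteratedDeriv_comp_line_div_factorial hf c v le_rfl, one_smul, zero_smul, add_zero] at hrem
  rw [hrem]
  exact abs_taylorTerm_sub_le hv fun α hα => h α hα ξ hξ

lemma convex_cube (d : ℕ) : Convex ℝ (cube d) :=
  convex_pi fun _ _ => convex_Icc 0 1

lemma mem_cube_of_mem_subcube {K : ℕ} {η : Fin d → ℕ} (hη : ∀ i, η i < K) {y : Fin d → ℝ}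
    (hy : ∀ i, y i ∈ Set.Icc ((η i : ℝ) / K) (((η i : ℝ) + 1) / K)) : y ∈ cube d := by
  intro i _
  have hK : (0 : ℝ) < K := by exact_mod_cast (Nat.zero_le _).trans_lt (hη i)
  have hηK : (η i : ℝ) + 1 ≤ K := by exact_mod_cast hη i
  exact ⟨(hy i).1.trans' (by positivity), (hy i).2.trans ((div_le_one hK).mpr hηK)⟩

lemma eucDist_le_sqrt_mul {x y : Fin d → ℝ} {δ : ℝ} (hδ : 0 ≤ δ) (h : ∀ i, |x i - y i| ≤ δ) :
    eucDist x y ≤ √d * δ := by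
  calc eucDist x y ≤ √(∑ _i : Fin d, δ ^ 2) :=
        Real.sqrt_le_sqrt (sum_le_sum fun i _ => sq_le_sq' (abs_le.mp (h i)).1 (abs_le.mp (h i)).2)
    _ = √d * δ := by simp [Real.sqrt_mul (Nat.cast_nonneg d), Real.sqrt_sq hδ]

lemma eucDist_add_smul_le {c v : Fin d → ℝ} {δ t : ℝ} (hδ : 0 ≤ δ)
    (hv : ∀ i, v i ∈ Set.Icc 0 δ) (ht : t ∈ Set.Icc (0 : ℝ) 1) :
    eucDist (c + t • v) c ≤ √d * δ :=
  eucDist_le_sqrt_mul hδ fun i => by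
    rw [Pi.add_apply, Pi.smul_apply, smul_eq_mul, add_sub_cancel_left,
      abs_of_nonneg (mul_nonneg ht.1 (hv i).1)]
    exact (mul_le_of_le_one_left (hv i).1 ht.2).trans (hv i).2

lemma sqrt_div_rpow_mul_div_pow_le (d K s : ℕ) {r : ℝ} (hr : 0 < r) :
    (√d / K) ^ r * ((d : ℝ) / K) ^ s
      ≤ (d : ℝ) ^ ((s : ℝ) + ((s : ℝ) + r) / 2) * (K : ℝ) ^ (-((s : ℝ) + r)) := by
  rcases Nat.eq_zero_or_pos d with rfl | hd
  · simp [Real.zero_rpow hr.ne']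
    positivity
  rcases Nat.eq_zero_or_pos K with rfl | hK
  · simp [Real.zero_rpow hr.ne']
    positivity
  have hd' : (1 : ℝ) ≤ d := by exact_mod_cast hd
  have hK' : (0 : ℝ) < K := by exact_mod_cast hK
  rw [Real.div_rpow (Real.sqrt_nonneg _) hK'.le, Real.sqrt_eq_rpow, ← Real.rpow_mul (by positivity),
    div_pow, ← Real.rpow_natCast, ← Real.rpow_natCast (K : ℝ), div_mul_div_comm,
    ← Real.rpow_add (by positivity), ← Real.rpow_add hK', div_eq_mul_inv, ← Real.rpow_neg hK'.le]
  have hs : (0 : ℝ) ≤ s := Nat.cast_nonneg s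
  rw [add_comm r]
  exact mul_le_mul_of_nonneg_right (Real.rpow_le_rpow_of_exponent_le hd' (by linarith))
    (by positivity)

end

theorem taylor_local_error_holder_general {d s : ℕ} (r : ℝ) (hr : r ∈ Set.Ioc (0 : ℝ) 1)
    (f : (Fin d → ℝ) → ℝ) (hf : ContDiff ℝ s f)
    (hholder : ∀ α : Fin d → ℕ, (∑ i, α i) = s →
      ∀ x ∈ cube d, ∀ y ∈ cube d,
        |multiPartialDeriv α f x - multiPartialDeriv α f y| ≤ eucDist x y ^ r)
    (K : ℕ) (η : Fin d → ℕ) (hη : ∀ i, η i < K)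
    (x : Fin d → ℝ) (hx : ∀ i, x i ∈ Set.Icc ((η i : ℝ) / K) (((η i : ℝ) + 1) / K)) :
    |f x - ∑ α ∈ Finset.univ.filter (fun α : Fin d → Fin (s + 1) =>
          (∑ i, (α i : ℕ)) ≤ s),
        multiPartialDeriv (fun i => (α i : ℕ)) f (fun i => (η i : ℝ) / K) /
            (∏ i, ((α i : ℕ).factorial : ℝ)) *
          ∏ i, (x i - (η i : ℝ) / K) ^ (α i : ℕ)|
      ≤ (d : ℝ) ^ ((s : ℝ) + ((s : ℝ) + r) / 2) * (K : ℝ) ^ (-((s : ℝ) + r)) := by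
  rw [sum_filter_le_eq_sum_taylorTerm]
  set v : Fin d → ℝ := fun i => x i - (η i : ℝ) / K
  set c : Fin d → ℝ := fun i => (η i : ℝ) / K
  have hc : c ∈ cube d := mem_cube_of_mem_subcube hη fun i =>
    ⟨le_rfl, div_le_div_of_nonneg_right (by linarith) (Nat.cast_nonneg K)⟩
  have hv : ∀ i, v i ∈ Set.Icc 0 (1 / (K : ℝ)) := fun i => by
    have := hx i
    simp only [v, add_div, Set.mem_Icc] at this ⊢
    constructor <;> linarith [this.1, this.2]
  have hsum0 : 0 ≤ ∑ i, v i := sum_nonneg fun i _ => (hv i).1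
  have hsum : ∑ i, v i ≤ d / K :=
    (sum_le_sum fun i _ => (hv i).2).trans_eq (by simp [div_eq_mul_inv])
  rw [show x = c + v by funext i; simp [c, v]]
  calc _ ≤ (√d / K) ^ r * (∑ i, v i) ^ s / s.factorial :=
        abs_sub_sum_taylorTerm_le hf (fun i => (hv i).1) fun α hα t ht =>
          (hholder α (mem_piAntidiag.mp hα).1 _
            ((convex_cube d).add_smul_sub_mem hc (mem_cube_of_mem_subcube hη hx) ht) c hc).trans
            (Real.rpow_le_rpow (Real.sqrt_nonneg _)
              ((eucDist_add_smul_le (by positivity) hv ht).trans_eq (mul_one_div _ _)) hr.1.le)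
    _ ≤ (√d / K) ^ r * ((d : ℝ) / K) ^ s := by
        rw [mul_div_assoc]
        gcongr
        exact (div_le_self (pow_nonneg hsum0 s) (by exact_mod_cast s.factorial_pos)).trans
          (pow_le_pow_left₀ hsum0 hsum s)
    _ ≤ _ := sqrt_div_rpow_mul_div_pow_le d K s hr.1

/-- For `f ∈ H^β([0,1]^d,1)` with `β = s + r`, and `x` in the hypercube `Q_η` with corner
`x_η = η/K`, the truncated Taylor expansion `T` of `f` at `x_η` satisfies
`|f(x) − T(x)| ≤ d^{s+β/2} K^{−β}`. -/
theorem taylor_local_error_holder {d s : ℕ} (hs : 0 < s) (r : ℝ) (hr : r ∈ Set.Ioc (0 : ℝ) 1)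
    (f : (Fin d → ℝ) → ℝ) (hf : ContDiff ℝ s f)
    (hbound : ∀ α : Fin d → ℕ, (∑ i, α i) ≤ s →
      ∀ x ∈ cube d, |multiPartialDeriv α f x| ≤ 1)
    (hholder : ∀ α : Fin d → ℕ, (∑ i, α i) = s →
      ∀ x ∈ cube d, ∀ y ∈ cube d,
        |multiPartialDeriv α f x - multiPartialDeriv α f y| ≤ eucDist x y ^ r)
    (K : ℕ) (hK : 0 < K) (η : Fin d → ℕ) (hη : ∀ i, η i < K)
    (x : Fin d → ℝ) (hx : ∀ i, x i ∈ Set.Icc ((η i : ℝ) / K) (((η i : ℝ) + 1) / K)) :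
    |f x - ∑ α ∈ Finset.univ.filter (fun α : Fin d → Fin (s + 1) =>
          (∑ i, (α i : ℕ)) ≤ s),
        multiPartialDeriv (fun i => (α i : ℕ)) f (fun i => (η i : ℝ) / K) /
            (∏ i, ((α i : ℕ).factorial : ℝ)) *
          ∏ i, (x i - (η i : ℝ) / K) ^ (α i : ℕ)|
      ≤ (d : ℝ) ^ ((s : ℝ) + ((s : ℝ) + r) / 2) * (K : ℝ) ^ (-((s : ℝ) + r)) :=
  taylor_local_error_holder_general r hr f hf hholder K η hη x hx
end

section
/- Let U_θ(x) = R_Z(θ₀) Π_{j=1}^L S(x) R_Z(θ_j), where S(x) = exp(i·arccos(x)·X) is the 2×2 unitary with entries [[x, i√(1−x²)],[i√(1−x²), x]] and R_Z(θ) = diag(e^{−iθ/2}, e^{iθ/2}). If there exist θ ∈ ℝ^{L+1} such that U_θ(x) = [[P(x), iQ(x)√(1−x²)],[iQ*(x)√(1−x²), P*(x)]] for polynomials P, Q ∈ ℂ[x], then: deg P ≤ L, deg Q ≤ L−1, P has parity L mod 2, Q has parity (L−1) mod 2, and |P(x)|² + (1−x²)|Q(x)|² = 1 for all x ∈ [−1,1].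 -/
open Complex

/-- The Pauli-`Z` rotation `R_Z(θ) = diag(e^{−iθ/2}, e^{iθ/2})`. -/
noncomputable def RZgate (θ : ℝ) : Matrix (Fin 2) (Fin 2) ℂ :=
  !![Complex.exp (-Complex.I * θ / 2), 0; 0, Complex.exp (Complex.I * θ / 2)]

/-- The data-encoding gate `S(x) = exp(i·arccos(x)·X)`. -/
noncomputable def Sgate (x : ℝ) : Matrix (Fin 2) (Fin 2) ℂ :=
  !![(x : ℂ), Complex.I * Real.sqrt (1 - x ^ 2);
     Complex.I * Real.sqrt (1 - x ^ 2), (x : ℂ)]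

/-- The `L`-layer single-qubit PQC `U_θ(x) = R_Z(θ₀) Π_{j=1}^L S(x) R_Z(θ_j)`. -/
noncomputable def Upqc (L : ℕ) (θ : Fin (L + 1) → ℝ) (x : ℝ) : Matrix (Fin 2) (Fin 2) ℂ :=
  RZgate (θ 0) * (List.ofFn fun j : Fin L => Sgate x * RZgate (θ j.succ)).prod

open Polynomial

lemma conj_eval (p : Polynomial ℂ) (x : ℝ) :
    (p.map (starRingEnd ℂ)).eval (x : ℂ) = starRingEnd ℂ (p.eval (x : ℂ)) := by
  have h := Polynomial.eval₂_at_apply (p := p) (starRingEnd ℂ) ((x : ℂ))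
  rw [Polynomial.eval_map]
  simpa [Complex.conj_ofReal] using h

lemma conj_exp_neg (t : ℝ) :
    (starRingEnd ℂ) (Complex.exp (-(Complex.I * t) / 2)) = Complex.exp (Complex.I * t / 2) := by
  rw [← Complex.exp_conj]
  congr 1
  simp [map_div₀, Complex.conj_ofReal, map_ofNat]

lemma conj_exp_pos (t : ℝ) :
    (starRingEnd ℂ) (Complex.exp (Complex.I * t / 2)) = Complex.exp (-(Complex.I * t) / 2) := by
  rw [← Complex.exp_conj]
  congr 1
  simp [map_div₀, Complex.conj_ofReal, map_ofNat]

lemma Upqc_succ (L : ℕ) (θ : Fin (L + 2) → ℝ) (x : ℝ) :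
    Upqc (L + 1) θ x =
      Upqc L (fun i => θ i.castSucc) x * (Sgate x * RZgate (θ (Fin.last (L + 1)))) := by
  simp only [Upqc, List.ofFn_succ', List.concat_eq_append, List.prod_append, List.prod_cons,
    List.prod_nil, mul_one, Fin.succ_castSucc, Fin.succ_last, Fin.castSucc_zero, mul_assoc]

lemma qsp_exists (L : ℕ) (θ : Fin (L + 1) → ℝ) :
    ∃ p q : Polynomial ℂ,
      (∀ k, L < k ∨ k % 2 ≠ L % 2 → p.coeff k = 0) ∧
      (∀ k, L ≤ k ∨ (k + 1) % 2 ≠ L % 2 → q.coeff k = 0) ∧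
      ∀ x : ℝ, x ∈ Set.Icc (-1 : ℝ) 1 →
        Upqc L θ x =
          !![p.eval (x : ℂ), Complex.I * q.eval (x : ℂ) * Real.sqrt (1 - x ^ 2);
             Complex.I * (q.map (starRingEnd ℂ)).eval (x : ℂ) * Real.sqrt (1 - x ^ 2),
             (p.map (starRingEnd ℂ)).eval (x : ℂ)] := by
  induction L with
  | zero =>
    refine ⟨Polynomial.C (Complex.exp (-Complex.I * θ 0 / 2)), 0, ?_, by simp, ?_⟩
    · intro k hk
      rw [Polynomial.coeff_C, if_neg (by omega)]
    · intro x hx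
      simp only [Upqc, List.ofFn_zero, List.prod_nil, mul_one, RZgate]
      ext i j
      fin_cases i <;> fin_cases j <;>
        simp [conj_eval, conj_exp_neg, conj_exp_pos]
  | succ L ih =>
    obtain ⟨p, q, hp, hq, hmat⟩ := ih (fun i => θ i.castSucc)
    have φdef : True := trivial
    refine ⟨Polynomial.C (Complex.exp (-Complex.I * (θ (Fin.last (L + 1)) : ℝ) / 2)) * (p * X ^ 1 + q * X ^ 2 - q),
      Polynomial.C (Complex.exp (Complex.I * (θ (Fin.last (L + 1)) : ℝ) / 2)) * (p + q * X ^ 1), ?_, ?_, ?_⟩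
    · intro k hk
      rw [Polynomial.coeff_C_mul, Polynomial.coeff_sub, Polynomial.coeff_add,
        Polynomial.coeff_mul_X_pow', Polynomial.coeff_mul_X_pow']
      have z1 : (if 1 ≤ k then p.coeff (k - 1) else 0) = 0 := by
        split_ifs with h
        · exact hp _ (by omega)
        · rfl
      have z2 : (if 2 ≤ k then q.coeff (k - 2) else 0) = 0 := by
        split_ifs with h
        · exact hq _ (by omega)
        · rfl
      have z3 : q.coeff k = 0 := hq _ (by omega)
      rw [z1, z2, z3]; ring
    · intro k hk
      rw [Polynomial.coeff_C_mul, Polynomial.coeff_add, Polynomial.coeff_mul_X_pow']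
      have z1 : p.coeff k = 0 := hp _ (by omega)
      have z2 : (if 1 ≤ k then q.coeff (k - 1) else 0) = 0 := by
        split_ifs with h
        · exact hq _ (by omega)
        · rfl
      rw [z1, z2]; ring
    · intro x hx
      have h1x : (0:ℝ) ≤ 1 - x ^ 2 := by
        obtain ⟨h1, h2⟩ := hx; nlinarith
      have hs : ((Real.sqrt (1 - x ^ 2) : ℝ) : ℂ) ^ 2 = 1 - (x : ℂ) ^ 2 := by
        rw [← Complex.ofReal_pow, Real.sq_sqrt h1x]; push_cast; ring
      have hst : (Complex.I * (Real.sqrt (1 - x ^ 2) : ℂ)) * (Complex.I * (Real.sqrt (1 - x ^ 2) : ℂ)) = (x:ℂ) ^ 2 - 1 := by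
        rw [mul_mul_mul_comm, Complex.I_mul_I]
        linear_combination -hs
      rw [Upqc_succ, hmat x hx]
      ext i j
      fin_cases i <;> fin_cases j <;>
        simp [Sgate, RZgate, Matrix.mul_apply, Fin.sum_univ_two, conj_eval, map_mul, map_add,
          map_sub, conj_exp_neg, conj_exp_pos, Complex.conj_ofReal, Complex.conj_I]
      · linear_combination (Complex.exp (-(Complex.I * (θ (Fin.last (L + 1)) : ℝ)) / 2) * q.eval (x:ℂ)) * hst
      · ring
      · ring
      · linear_combination (Complex.exp (Complex.I * (θ (Fin.last (L + 1)) : ℝ) / 2) * (starRingEnd ℂ) (q.eval (x:ℂ))) * hst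

lemma det_Upqc (L : ℕ) (θ : Fin (L + 1) → ℝ) (x : ℝ) (hx : x ∈ Set.Icc (-1 : ℝ) 1) :
    (Upqc L θ x).det = 1 := by
  have h1x : (0:ℝ) ≤ 1 - x ^ 2 := by
    obtain ⟨h1, h2⟩ := hx; nlinarith
  have hs : ((Real.sqrt (1 - x ^ 2) : ℝ) : ℂ) ^ 2 = 1 - (x : ℂ) ^ 2 := by
    rw [← Complex.ofReal_pow, Real.sq_sqrt h1x]; push_cast; ring
  have hR : ∀ φ : ℝ, (RZgate φ).det = 1 := by
    intro φ
    rw [RZgate, Matrix.det_fin_two_of, ← Complex.exp_add,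
      show -Complex.I * φ / 2 + Complex.I * φ / 2 = 0 by ring, Complex.exp_zero]
    ring
  have hS : (Sgate x).det = 1 := by
    rw [Sgate, Matrix.det_fin_two_of]
    linear_combination hs - ((Real.sqrt (1 - x ^ 2) : ℂ)) ^ 2 * Complex.I_sq
  have hlist : ∀ l : List (Matrix (Fin 2) (Fin 2) ℂ), (∀ m ∈ l, m.det = 1) → l.prod.det = 1 := by
    intro l
    induction l with
    | nil => simp
    | cons a t ihl =>
      intro hmem
      rw [List.prod_cons, Matrix.det_mul, hmem a (by simp), one_mul]
      exact ihl fun m hm => hmem m (by simp [hm])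
  rw [Upqc, Matrix.det_mul, hR, one_mul]
  apply hlist
  intro m hm
  rw [List.mem_ofFn] at hm
  obtain ⟨j, rfl⟩ := hm
  rw [Matrix.det_mul, hS, hR, one_mul]


/-- Necessity direction of the quantum signal processing characterization: if `U_θ(x)`
has the form `[[P(x), iQ(x)√(1−x²)],[iQ*(x)√(1−x²), P*(x)]]` for polynomials `P, Q`,
then `deg P ≤ L`, `deg Q ≤ L−1`, `P` has parity `L mod 2`, `Q` has parity `(L−1) mod 2`,
and `|P(x)|² + (1−x²)|Q(x)|² = 1` on `[−1,1]`. -/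
theorem qsp_necessity (L : ℕ) (θ : Fin (L + 1) → ℝ) (P Q : Polynomial ℂ)
    (h : ∀ x : ℝ, x ∈ Set.Icc (-1 : ℝ) 1 →
      Upqc L θ x =
        !![P.eval (x : ℂ), Complex.I * Q.eval (x : ℂ) * Real.sqrt (1 - x ^ 2);
           Complex.I * (Q.map (starRingEnd ℂ)).eval (x : ℂ) * Real.sqrt (1 - x ^ 2),
           (P.map (starRingEnd ℂ)).eval (x : ℂ)]) :
    P.natDegree ≤ L ∧ Q.natDegree ≤ L - 1 ∧
      (∀ k, k % 2 ≠ L % 2 → P.coeff k = 0) ∧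
      (∀ k, k % 2 ≠ (L - 1) % 2 → Q.coeff k = 0) ∧
      ∀ x : ℝ, x ∈ Set.Icc (-1 : ℝ) 1 →
        ‖P.eval (x : ℂ)‖ ^ 2 + (1 - x ^ 2) * ‖Q.eval (x : ℂ)‖ ^ 2 = 1 := by
  obtain ⟨p, q, hp, hq, hmat⟩ := qsp_exists L θ
  -- pointwise agreement of the entries
  have hP : ∀ x : ℝ, x ∈ Set.Icc (-1 : ℝ) 1 → P.eval (x : ℂ) = p.eval (x : ℂ) := by
    intro x hx
    have hM := (h x hx).symm.trans (hmat x hx)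
    have := congrFun (congrFun hM 0) 0
    simpa using this
  have hQ : ∀ x : ℝ, x ∈ Set.Icc (-(1:ℝ)/2) (1/2) → Q.eval (x : ℂ) = q.eval (x : ℂ) := by
    intro x hx
    have hx' : x ∈ Set.Icc (-1 : ℝ) 1 := by
      constructor <;> [linarith [hx.1]; linarith [hx.2]]
    have hM := (h x hx').symm.trans (hmat x hx')
    have h01 := congrFun (congrFun hM 0) 1
    simp only [Matrix.cons_val', Matrix.cons_val_zero, Matrix.cons_val_one, Matrix.head_cons,
      Matrix.empty_val', Matrix.cons_val_fin_one, Matrix.head_fin_const, Matrix.of_apply] at h01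
    have hs0 : ((Real.sqrt (1 - x ^ 2) : ℝ) : ℂ) ≠ 0 := by
      rw [Complex.ofReal_ne_zero]
      refine ne_of_gt (Real.sqrt_pos.2 ?_)
      nlinarith [hx.1, hx.2]
    have := mul_right_cancel₀ hs0 h01
    exact mul_left_cancel₀ Complex.I_ne_zero this
  -- identify the polynomials
  have hIccInf : (Set.Icc (-(1:ℝ)/2) (1/2)).Infinite := Set.Icc_infinite (by norm_num)
  have hIccInf' : (Set.Icc (-1:ℝ) 1).Infinite := Set.Icc_infinite (by norm_num)
  have hPp : P = p := by
    apply Polynomial.eq_of_infinite_eval_eq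
    apply Set.Infinite.mono (s := (fun t : ℝ => (t : ℂ)) '' Set.Icc (-1 : ℝ) 1)
    · rintro z ⟨t, ht, rfl⟩
      exact hP t ht
    · exact Set.Infinite.image (fun a _ b _ hab => Complex.ofReal_injective hab) hIccInf'
  have hQq : Q = q := by
    apply Polynomial.eq_of_infinite_eval_eq
    apply Set.Infinite.mono (s := (fun t : ℝ => (t : ℂ)) '' Set.Icc (-(1:ℝ)/2) (1/2))
    · rintro z ⟨t, ht, rfl⟩
      exact hQ t ht
    · exact Set.Infinite.image (fun a _ b _ hab => Complex.ofReal_injective hab) hIccInf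
  refine ⟨?_, ?_, ?_, ?_, ?_⟩
  · rw [hPp]
    exact Polynomial.natDegree_le_iff_coeff_eq_zero.2 fun m hm => hp m (Or.inl hm)
  · rw [hQq]
    exact Polynomial.natDegree_le_iff_coeff_eq_zero.2 fun m hm => hq m (Or.inl (by omega))
  · intro k hk
    rw [hPp]
    exact hp k (Or.inr hk)
  · intro k hk
    rw [hQq]
    exact hq k (by omega)
  · intro x hx
    have h1x : (0:ℝ) ≤ 1 - x ^ 2 := by
      obtain ⟨h1, h2⟩ := hx; nlinarith
    have hs : ((Real.sqrt (1 - x ^ 2) : ℝ) : ℂ) ^ 2 = 1 - (x : ℂ) ^ 2 := by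
      rw [← Complex.ofReal_pow, Real.sq_sqrt h1x]; push_cast; ring
    have hdet := det_Upqc L θ x hx
    rw [h x hx, Matrix.det_fin_two_of, conj_eval, conj_eval] at hdet
    have E : P.eval (x:ℂ) * (starRingEnd ℂ) (P.eval (x:ℂ)) +
        (1 - (x:ℂ) ^ 2) * (Q.eval (x:ℂ) * (starRingEnd ℂ) (Q.eval (x:ℂ))) = 1 := by
      linear_combination hdet - (Q.eval (x:ℂ) * (starRingEnd ℂ) (Q.eval (x:ℂ))) * hs +
        ((Real.sqrt (1 - x ^ 2) : ℂ)) ^ 2 * (Q.eval (x:ℂ) * (starRingEnd ℂ) (Q.eval (x:ℂ))) * Complex.I_sq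
    rw [Complex.mul_conj, Complex.mul_conj] at E
    rw [Complex.sq_norm, Complex.sq_norm]
    exact_mod_cast E
end
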